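/- arXiv:1808.05965 — 6 statements merged into one kernel-verified Lean document; each statement's English description precedes it below -/
import Mathlib

section
/- If a collection of affine subspaces {A_ℓ}_{ℓ=1}^n of R^D is affinely independent (dim(aff(∪_ℓ A_ℓ)) = Σ_ℓ dim(A_ℓ) + (n−1)), then for any two nonempty disjoint index sets I, I' ⊆ {1,...,n}, the affine subspaces aff(∪_{κ∈I} A_κ) and aff(∪_{κ'∈I'} A_{κ'}) are affinely disjoint. -/
/-!
For nonempty affine subspaces `dim (B ⊔ C) + dim (B.direction ⊓ C.direction) ≤ dim B + dim C + 1`,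
and `dim (B ⊔ C) ≤ dim B + dim C` when `B` and `C` meet. Iterating, `dim (S.sup A) + 1` is at most
`∑ i ∈ S, (dim (A i) + 1)`. Affine independence says this bound is attained by the whole family;
splitting it along `I`, `I'` and the rest, the join of the parts over `I` and `I'` must then attain
the pairwise bound `dim B + dim C + 1`, which forces `B ∩ C = ∅` and
`B.direction ⊓ C.direction = ⊥`.
-/

open Module

namespace AffineSubspace

variable {k V P ι : Type*} [DivisionRing k] [AddCommGroup V] [Module k V] [AddTorsor V P]

def AffinelyDisjoint (B C : AffineSubspace k P) : Prop :=
  (B : Set P) ∩ C = ∅ ∧ B.direction ⊓ C.direction = ⊥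

/-- The paper's condition `dim (⨆ i, A i) = ∑ i, dim (A i) + (n - 1)`, with `1` added to both
sides so that no truncated subtraction occurs (both forms fail for an empty family). -/
def AffinelyIndependent [Fintype ι] (A : ι → AffineSubspace k P) : Prop :=
  finrank k (⨆ i, A i).direction + 1 = ∑ i, (finrank k (A i).direction + 1)

theorem affineSpan_iUnion_eq_iSup (A : ι → AffineSubspace k P) :
    affineSpan k (⋃ i, (A i : Set P)) = ⨆ i, A i := by
  simp_rw [span_iUnion, affineSpan_coe]

theorem affineSpan_biUnion_eq_finset_sup (A : ι → AffineSubspace k P) (S : Finset ι) :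
    affineSpan k (⋃ i ∈ S, (A i : Set P)) = S.sup A := by
  refine le_antisymm
    (affineSpan_le.mpr (Set.iUnion₂_subset fun i hi => Finset.le_sup (f := A) hi)) ?_
  refine Finset.sup_le fun i hi => ?_
  rw [← affineSpan_coe (A i)]
  exact affineSpan_mono k (Set.subset_iUnion₂ (s := fun i (_ : i ∈ S) => (A i : Set P)) i hi)

variable [FiniteDimensional k V]

theorem finrank_direction_sup_add_finrank_inf_le {B C : AffineSubspace k P}
    (hB : (B : Set P).Nonempty) (hC : (C : Set P).Nonempty) :
    finrank k (B ⊔ C).direction + finrank k ↥(B.direction ⊓ C.direction) ≤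
      finrank k B.direction + finrank k C.direction + 1 := by
  obtain ⟨p, hp⟩ := hB
  obtain ⟨q, hq⟩ := hC
  have hline : finrank k (k ∙ (q -ᵥ p)) ≤ 1 := (finrank_span_le_card {q -ᵥ p}).trans (by simp)
  rw [direction_sup hp hq]
  have := Submodule.finrank_add_le_finrank_add_finrank (B.direction ⊔ C.direction) (k ∙ (q -ᵥ p))
  have := Submodule.finrank_sup_add_finrank_inf_eq B.direction C.direction
  omega

theorem finrank_direction_sup_le (B C : AffineSubspace k P) :
    finrank k (B ⊔ C).direction ≤ finrank k B.direction + finrank k C.direction + 1 := by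
  rcases B.eq_bot_or_nonempty with rfl | hB
  · rw [bot_sup_eq]
    omega
  rcases C.eq_bot_or_nonempty with rfl | hC
  · rw [sup_bot_eq]
    omega
  have := finrank_direction_sup_add_finrank_inf_le hB hC
  omega

theorem affinelyDisjoint_of_finrank_direction_sup {B C : AffineSubspace k P}
    (h : finrank k B.direction + finrank k C.direction + 1 ≤ finrank k (B ⊔ C).direction) :
    AffinelyDisjoint B C := by
  refine ⟨Set.eq_empty_of_forall_notMem fun p ⟨hpB, hpC⟩ => ?_, ?_⟩
  · have := Submodule.finrank_add_le_finrank_add_finrank B.direction C.direction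
    rw [direction_sup_eq_sup_direction hpB hpC] at h
    omega
  rcases B.eq_bot_or_nonempty with rfl | hB
  · rw [direction_bot, bot_inf_eq]
  rcases C.eq_bot_or_nonempty with rfl | hC
  · rw [direction_bot, inf_bot_eq]
  have := finrank_direction_sup_add_finrank_inf_le hB hC
  exact Submodule.finrank_eq_zero.mp (by omega)

variable [DecidableEq ι]

theorem finrank_direction_sup_finset_sup_le (A : ι → AffineSubspace k P) (B : AffineSubspace k P)
    (S : Finset ι) :
    finrank k (B ⊔ S.sup A).direction ≤
      finrank k B.direction + ∑ i ∈ S, (finrank k (A i).direction + 1) := by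
  induction S using Finset.induction_on generalizing B with
  | empty => rw [Finset.sup_empty, sup_bot_eq, Finset.sum_empty, add_zero]
  | insert a S ha ih =>
    rw [Finset.sup_insert, ← sup_assoc, Finset.sum_insert ha]
    have := finrank_direction_sup_le B (A a)
    have := ih (B ⊔ A a)
    omega

theorem finrank_direction_finset_sup_add_one_le (A : ι → AffineSubspace k P) {S : Finset ι}
    (hS : S.Nonempty) :
    finrank k (S.sup A).direction + 1 ≤ ∑ i ∈ S, (finrank k (A i).direction + 1) := by
  obtain ⟨a, ha⟩ := hS
  rw [← Finset.insert_erase ha, Finset.sup_insert, Finset.sum_insert (Finset.notMem_erase a S)]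
  have := finrank_direction_sup_finset_sup_le A (A a) (S.erase a)
  omega

theorem AffinelyIndependent.affinelyDisjoint_finset_sup [Fintype ι] {A : ι → AffineSubspace k P}
    (hA : AffinelyIndependent A) {I I' : Finset ι} (hI : I.Nonempty) (hI' : I'.Nonempty)
    (hdisj : Disjoint I I') : AffinelyDisjoint (I.sup A) (I'.sup A) := by
  rw [AffinelyIndependent, ← Finset.sup_univ_eq_iSup A] at hA
  obtain ⟨J, hJ, hunion⟩ : ∃ J, Disjoint (I ∪ I') J ∧ (I ∪ I') ∪ J = Finset.univ :=
    ⟨_, Finset.disjoint_sdiff, Finset.union_sdiff_of_subset (Finset.subset_univ _)⟩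
  rw [← hunion, Finset.sum_union hJ, Finset.sum_union hdisj, Finset.sup_union,
    Finset.sup_union] at hA
  have := finrank_direction_sup_finset_sup_le A (I.sup A ⊔ I'.sup A) J
  have := finrank_direction_finset_sup_add_one_le A hI
  have := finrank_direction_finset_sup_add_one_le A hI'
  exact affinelyDisjoint_of_finrank_direction_sup (by omega)

end AffineSubspace

open AffineSubspace

theorem stmt5_general (D n : ℕ) (A : Fin n → AffineSubspace ℝ (Fin D → ℝ))
    (hind : Module.finrank ℝ (affineSpan ℝ (⋃ ℓ, (A ℓ : Set (Fin D → ℝ)))).direction =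
      (∑ ℓ, Module.finrank ℝ (A ℓ).direction) + (n - 1))
    (I I' : Finset (Fin n)) (hI : I.Nonempty) (hI' : I'.Nonempty) (hdisj : Disjoint I I') :
    ((affineSpan ℝ (⋃ κ ∈ I, (A κ : Set (Fin D → ℝ))) : Set (Fin D → ℝ)) ∩
        (affineSpan ℝ (⋃ κ ∈ I', (A κ : Set (Fin D → ℝ))) : Set (Fin D → ℝ)) = ∅) ∧
      (affineSpan ℝ (⋃ κ ∈ I, (A κ : Set (Fin D → ℝ)))).direction ⊓
        (affineSpan ℝ (⋃ κ ∈ I', (A κ : Set (Fin D → ℝ)))).direction = ⊥ := by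
  have hA : AffinelyIndependent A := by
    have hn : 1 ≤ n := hI.choose.pos
    rw [affineSpan_iUnion_eq_iSup] at hind
    rw [AffinelyIndependent, hind, Finset.sum_add_distrib, Finset.sum_const, Finset.card_univ,
      Fintype.card_fin, smul_eq_mul, mul_one]
    omega
  rw [affineSpan_biUnion_eq_finset_sup, affineSpan_biUnion_eq_finset_sup]
  exact hA.affinelyDisjoint_finset_sup hI hI' hdisj

/-- If a collection of affine subspaces is affinely independent, then the affine spans of
the unions over any two nonempty disjoint index sets are affinely disjoint. -/
theorem stmt5 (D n : ℕ) (A : Fin n → AffineSubspace ℝ (Fin D → ℝ))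
    (hne : ∀ ℓ, (A ℓ : Set (Fin D → ℝ)).Nonempty)
    (hind : Module.finrank ℝ (affineSpan ℝ (⋃ ℓ, (A ℓ : Set (Fin D → ℝ)))).direction =
      (∑ ℓ, Module.finrank ℝ (A ℓ).direction) + (n - 1))
    (I I' : Finset (Fin n)) (hI : I.Nonempty) (hI' : I'.Nonempty) (hdisj : Disjoint I I') :
    ((affineSpan ℝ (⋃ κ ∈ I, (A κ : Set (Fin D → ℝ))) : Set (Fin D → ℝ)) ∩
        (affineSpan ℝ (⋃ κ ∈ I', (A κ : Set (Fin D → ℝ))) : Set (Fin D → ℝ)) = ∅) ∧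
      (affineSpan ℝ (⋃ κ ∈ I, (A κ : Set (Fin D → ℝ)))).direction ⊓
        (affineSpan ℝ (⋃ κ ∈ I', (A κ : Set (Fin D → ℝ)))).direction = ⊥ :=
  stmt5_general D n A hind I I' hI hI' hdisj
end

section
/- Let A be an affine subspace of R^D, let X^(in) be a finite set of points in A, and X^(out) a finite set of points in R^D. Suppose x_j lies in the relative interior of conv(X^(in) \ {x_j}). If A does not intersect conv(X^(out)), then every optimal solution c of the ASSC problem for x_j over the dictionary X^(in) ∪ X^(out) assigns zero coefficients to all points of X^(out). -/
/-- Subspace-preserving recovery for relative interior points (the "if" direction):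
if the affine subspace A does not intersect conv(X^(out)), then every optimal
solution of the ASSC problem for x_j assigns zero coefficients to points of X^(out). -/
theorem stmt11 (D : ℕ) (A : AffineSubspace ℝ (Fin D → ℝ))
    (Xin Xout : Finset (Fin D → ℝ)) (hXin : (Xin : Set (Fin D → ℝ)) ⊆ (A : Set (Fin D → ℝ)))
    (xj : Fin D → ℝ)
    (hx : xj ∈ intrinsicInterior ℝ (convexHull ℝ ((Xin.erase xj : Finset _) : Set (Fin D → ℝ))))
    (hsep : (A : Set (Fin D → ℝ)) ∩ convexHull ℝ (Xout : Set (Fin D → ℝ)) = ∅)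
    (c : (Fin D → ℝ) → ℝ)
    (hfeas : xj = ∑ i ∈ Xin.erase xj ∪ Xout, c i • i ∧ ∑ i ∈ Xin.erase xj ∪ Xout, c i = 1)
    (hopt : ∀ c' : (Fin D → ℝ) → ℝ,
      (xj = ∑ i ∈ Xin.erase xj ∪ Xout, c' i • i ∧ ∑ i ∈ Xin.erase xj ∪ Xout, c' i = 1) →
      ∑ i ∈ Xin.erase xj ∪ Xout, |c i| ≤ ∑ i ∈ Xin.erase xj ∪ Xout, |c' i|) :
    ∀ i ∈ Xout, c i = 0 := by
  classical
  set S := Xin.erase xj ∪ Xout with hS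
  -- no point of Xout lies in A
  have hXoutA : ∀ x ∈ Xout, x ∉ (A : Set (Fin D → ℝ)) := by
    intro x hxO hxA
    have : x ∈ (A : Set (Fin D → ℝ)) ∩ convexHull ℝ (Xout : Set (Fin D → ℝ)) :=
      ⟨hxA, subset_convexHull ℝ _ (by exact_mod_cast hxO)⟩
    simp [hsep] at this
  have hdisj : Disjoint (Xin.erase xj) Xout := by
    rw [Finset.disjoint_left]
    intro x hxE hxO
    exact hXoutA x hxO (hXin (Finset.mem_of_mem_erase hxE))
  -- xj is in the hull of Xin.erase xj, hence in A
  have hhull : xj ∈ convexHull ℝ ((Xin.erase xj : Finset _) : Set (Fin D → ℝ)) :=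
    intrinsicInterior_subset hx
  have hhullA : convexHull ℝ ((Xin.erase xj : Finset _) : Set (Fin D → ℝ)) ⊆
      (A : Set (Fin D → ℝ)) :=
    convexHull_min (fun x hx => hXin (Finset.mem_of_mem_erase (by exact_mod_cast hx)))
      (A.convex)
  have hxjA : xj ∈ (A : Set (Fin D → ℝ)) := hhullA hhull
  -- get a convex combination representation of xj
  rw [Finset.convexHull_eq] at hhull
  obtain ⟨w, hw0, hw1, hwx⟩ := hhull
  rw [Finset.centerMass_eq_of_sum_1 _ _ hw1] at hwx
  simp only [id] at hwx
  -- the extension of w by zero is feasible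
  set c' : (Fin D → ℝ) → ℝ := fun i => if i ∈ Xin.erase xj then w i else 0 with hc'
  have hfeas' : xj = ∑ i ∈ S, c' i • i ∧ ∑ i ∈ S, c' i = 1 := by
    constructor
    · rw [hS, Finset.sum_union hdisj]
      have h1 : ∑ i ∈ Xin.erase xj, c' i • i = ∑ i ∈ Xin.erase xj, w i • i :=
        Finset.sum_congr rfl (fun i hi => by rw [hc']; simp only [if_pos hi])
      have h2 : ∑ i ∈ Xout, c' i • i = 0 := by
        apply Finset.sum_eq_zero
        intro i hi
        have : i ∉ Xin.erase xj := Finset.disjoint_right.mp hdisj hi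
        rw [hc']; simp only [if_neg this, zero_smul]
      rw [h1, h2, add_zero, hwx]
    · rw [hS, Finset.sum_union hdisj]
      have h1 : ∑ i ∈ Xin.erase xj, c' i = ∑ i ∈ Xin.erase xj, w i :=
        Finset.sum_congr rfl (fun i hi => by rw [hc']; simp only [if_pos hi])
      have h2 : ∑ i ∈ Xout, c' i = 0 := by
        apply Finset.sum_eq_zero
        intro i hi
        have : i ∉ Xin.erase xj := Finset.disjoint_right.mp hdisj hi
        rw [hc']; simp only [if_neg this]
      rw [h1, h2, add_zero, hw1]
  -- optimality: the ℓ¹ norm of c is ≤ 1, while ∑ c = 1, so c is nonnegative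
  have hle : ∑ i ∈ S, |c i| ≤ 1 := by
    have := hopt c' hfeas'
    have heq : ∑ i ∈ S, |c' i| = 1 := by
      rw [hS, Finset.sum_union hdisj]
      have h1 : ∑ i ∈ Xin.erase xj, |c' i| = ∑ i ∈ Xin.erase xj, w i :=
        Finset.sum_congr rfl (fun i hi => by rw [hc']; simp only [if_pos hi]; exact abs_of_nonneg (hw0 i hi))
      have h2 : ∑ i ∈ Xout, |c' i| = 0 := by
        apply Finset.sum_eq_zero
        intro i hi
        have : i ∉ Xin.erase xj := Finset.disjoint_right.mp hdisj hi
        rw [hc']; simp only [if_neg this, abs_zero]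
      rw [h1, h2, add_zero, hw1]
    rw [heq] at this
    exact this
  have hge : (1 : ℝ) ≤ ∑ i ∈ S, |c i| := by
    calc (1 : ℝ) = ∑ i ∈ S, c i := hfeas.2.symm
    _ ≤ ∑ i ∈ S, |c i| := Finset.sum_le_sum (fun i _ => le_abs_self _)
  have habs : ∑ i ∈ S, (|c i| - c i) = 0 := by
    rw [Finset.sum_sub_distrib, hfeas.2]
    linarith
  have hnonneg : ∀ i ∈ S, 0 ≤ c i := by
    intro i hi
    have h0 : |c i| - c i = 0 := by
      have := Finset.sum_eq_zero_iff_of_nonneg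
        (fun j (_ : j ∈ S) => sub_nonneg.mpr (le_abs_self _) : ∀ j ∈ S, 0 ≤ |c j| - c j) |>.mp habs i hi
      linarith [this]
    have := abs_nonneg (c i)
    cases abs_cases (c i) with
    | inl h => linarith [h.2]
    | inr h => linarith [h.1, h.2]
  -- suppose the Xout-mass t is positive; derive a contradiction
  set t := ∑ i ∈ Xout, c i with ht
  have htnn : 0 ≤ t := Finset.sum_nonneg (fun i hi => hnonneg i (Finset.mem_union_right _ hi))
  have hsplit : ∑ i ∈ Xin.erase xj, c i + t = 1 := by
    rw [ht, ← Finset.sum_union hdisj]; exact hfeas.2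
  have hsplitx : ∑ i ∈ Xin.erase xj, c i • i + ∑ i ∈ Xout, c i • i = xj := by
    rw [← Finset.sum_union hdisj]; exact hfeas.1.symm
  have htz : t = 0 := by
    by_contra htne
    have htpos : 0 < t := lt_of_le_of_ne htnn (Ne.symm htne)
    -- z := center of mass of the Xout part lies in conv(Xout)
    have hz : Xout.centerMass c id ∈ convexHull ℝ (Xout : Set (Fin D → ℝ)) :=
      Finset.centerMass_mem_convexHull _
        (fun i hi => hnonneg i (Finset.mem_union_right _ hi)) (ht ▸ htpos)
        (fun i hi => by exact_mod_cast hi)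
    have hzdef : Xout.centerMass c id = t⁻¹ • ∑ i ∈ Xout, c i • i := by
      simp [Finset.centerMass, ← ht]
    -- show z ∈ A, contradicting hsep
    have hzA : Xout.centerMass c id ∈ (A : Set (Fin D → ℝ)) := by
      have hsnn : 0 ≤ ∑ i ∈ Xin.erase xj, c i :=
        Finset.sum_nonneg (fun i hi => hnonneg i (Finset.mem_union_left _ hi))
      have ht1' : t ≤ 1 := by linarith
      rcases eq_or_lt_of_le ht1' with ht1 | ht1
      · -- t = 1 : all inner coefficients vanish, so z = xj
        have hin0 : ∀ i ∈ Xin.erase xj, c i = 0 := by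
          intro i hi
          have hs0 : ∑ i ∈ Xin.erase xj, c i = 0 := by linarith
          exact (Finset.sum_eq_zero_iff_of_nonneg
            (fun j hj => hnonneg j (Finset.mem_union_left _ hj))).mp hs0 i hi
        have hz0 : ∑ i ∈ Xin.erase xj, c i • i = 0 :=
          Finset.sum_eq_zero (fun i hi => by rw [hin0 i hi, zero_smul])
        have : ∑ i ∈ Xout, c i • i = xj := by
          rw [← hsplitx, hz0, zero_add]
        rw [hzdef, this, ht1, inv_one, one_smul]
        exact hxjA
      · -- t < 1 : y := inner center of mass lies in A, and z is an affine combination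
        have hspos : 0 < ∑ i ∈ Xin.erase xj, c i := by linarith
        have hy : (Xin.erase xj).centerMass c id ∈
            convexHull ℝ ((Xin.erase xj : Finset _) : Set (Fin D → ℝ)) :=
          Finset.centerMass_mem_convexHull _
            (fun i hi => hnonneg i (Finset.mem_union_left _ hi)) hspos
            (fun i hi => by exact_mod_cast hi)
        have hyA : (Xin.erase xj).centerMass c id ∈ (A : Set (Fin D → ℝ)) := hhullA hy
        set y := (Xin.erase xj).centerMass c id with hyd
        have hydef : ∑ i ∈ Xin.erase xj, c i • i = (1 - t) • y := by
          rw [hyd, Finset.centerMass]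
          rw [smul_smul]
          have : ∑ i ∈ Xin.erase xj, c i = 1 - t := by linarith
          rw [this]
          rw [mul_inv_cancel₀ (by linarith), one_smul]
          simp only [id_eq]
        -- z = ((1-t)/t) • (xj - y) + xj
        have key : Xout.centerMass c id = ((1 - t)/t) • (xj - y) + xj := by
          rw [hzdef]
          have hx2 : ∑ i ∈ Xout, c i • i = xj - (1 - t) • y := by
            rw [← hsplitx, hydef]; abel
          rw [hx2]
          rw [smul_sub, smul_sub]
          funext k
          simp only [Pi.add_apply, Pi.sub_apply, Pi.smul_apply, smul_eq_mul]
          field_simp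
          ring
        rw [key]
        exact A.smul_vsub_vadd_mem _ hxjA hyA hxjA
    have : Xout.centerMass c id ∈ (A : Set (Fin D → ℝ)) ∩
        convexHull ℝ (Xout : Set (Fin D → ℝ)) := ⟨hzA, hz⟩
    simp [hsep] at this
  intro i hi
  exact (Finset.sum_eq_zero_iff_of_nonneg
    (fun j hj => hnonneg j (Finset.mem_union_right _ hj))).mp htz i hi
end

section
/- Let A be an affine subspace of R^D and X^(out) a finite set of points in R^D \ A. If A intersects conv(X^(out)) and x_j lies in the relative interior of conv(X^(in) \ {x_j}) with X^(in) ⊆ A finite, then there exists an optimal solution of the ASSC problem for x_j (with dictionary (X^(in) \ {x_j}) ∪ X^(out)) that has a nonzero coefficient on some point of X^(out), i.e., a non-subspace-preserving optimal solution exists. -/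
/-! Since `z ∈ A ∩ conv(X^(out))` lies in the affine span `A` of `K = conv(X^(in) \ {x_j})` and
`x_j` is in the relative interior of `K`, the line from `z` through `x_j` stays in `K` a little
beyond `x_j`; so `x_j` lies strictly between a point of `K` and `z`. Expanding both endpoints as
convex combinations gives an affine representation of `x_j` with nonnegative coefficients and
positive weight on `X^(out)`. Nonnegative coefficients summing to `1` have `ℓ¹`-norm `1`, which is
minimal because `1 = |∑ c'ᵢ| ≤ ∑ |c'ᵢ|` for every feasible `c'`. -/

open AffineMap Filter Finset Topology

section IntrinsicInterior

variable {E : Type*} [AddCommGroup E] [Module ℝ E] [TopologicalSpace E]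
  [IsTopologicalAddGroup E] [ContinuousSMul ℝ E] {s : Set E} {x z : E}

theorem eventually_lineMap_mem_of_mem_intrinsicInterior (hx : x ∈ intrinsicInterior ℝ s)
    (hz : z ∈ affineSpan ℝ s) : ∀ᶠ t in 𝓝 (0 : ℝ), lineMap x z t ∈ s := by
  obtain ⟨y, hy, rfl⟩ := mem_intrinsicInterior.mp hx
  let f : ℝ → affineSpan ℝ s := fun t => ⟨lineMap (y : E) z t, lineMap_mem t y.2 hz⟩
  have hf : Continuous f := lineMap_continuous.subtype_mk _
  have hf0 : f 0 = y := Subtype.ext (lineMap_apply_zero _ _)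
  have hs : ((↑) ⁻¹' s : Set (affineSpan ℝ s)) ∈ 𝓝 (f 0) := hf0 ▸ mem_interior_iff_mem_nhds.mp hy
  exact hf.continuousAt.preimage_mem_nhds hs

theorem exists_mem_openSegment_of_mem_intrinsicInterior (hx : x ∈ intrinsicInterior ℝ s)
    (hz : z ∈ affineSpan ℝ s) : ∃ y ∈ s, x ∈ openSegment ℝ y z := by
  obtain ⟨t, hts, ht : t < 0⟩ :=
    ((eventually_lineMap_mem_of_mem_intrinsicInterior hx hz).filter_mono
      nhdsWithin_le_nhds |>.and self_mem_nhdsWithin).exists (f := 𝓝[<] (0 : ℝ))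
  have h1t : 0 < 1 - t := by linarith
  -- `lineMap x z t = x + t • (z - x)`, so `x = (lineMap x z t - t • z) / (1 - t)`
  refine ⟨_, hts, 1 / (1 - t), -t / (1 - t), by positivity, div_pos (neg_pos.mpr ht) h1t,
    by field_simp; ring, ?_⟩
  rw [lineMap_apply_module]
  match_scalars <;> field_simp
  ring

end IntrinsicInterior

section ConvexCombination

variable {𝕜 E : Type*} [Field 𝕜] [LinearOrder 𝕜] [IsStrictOrderedRing 𝕜] [AddCommGroup E]
  [Module 𝕜 E]

theorem Finset.exists_weights_of_mem_convexHull {s u : Finset E} (hsu : s ⊆ u) {y : E}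
    (hy : y ∈ convexHull 𝕜 (s : Set E)) :
    ∃ w : E → 𝕜, (∀ i, 0 ≤ w i) ∧ (∀ i ∉ s, w i = 0) ∧ ∑ i ∈ u, w i = 1 ∧
      ∑ i ∈ u, w i • i = y := by
  classical
  obtain ⟨w, hw0, hw1, hwy⟩ := Finset.mem_convexHull'.mp hy
  refine ⟨fun i => if i ∈ s then w i else 0, fun i => ?_, fun i hi => if_neg hi, ?_, ?_⟩
  · dsimp only
    split_ifs with hi
    exacts [hw0 i hi, le_rfl]
  · rw [← sum_subset hsu (fun i _ hi => if_neg hi), ← hw1]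
    exact sum_congr rfl fun i hi => if_pos hi
  · rw [← sum_subset hsu (fun i _ hi => by simp [hi]), ← hwy]
    exact sum_congr rfl fun i hi => by simp only [if_pos hi]

theorem Finset.exists_weights_of_mem_openSegment [DecidableEq E] {s t : Finset E} {x y z : E}
    (hy : y ∈ convexHull 𝕜 (s : Set E)) (hz : z ∈ convexHull 𝕜 (t : Set E))
    (hx : x ∈ openSegment 𝕜 y z) :
    ∃ c : E → 𝕜, (∀ i, 0 ≤ c i) ∧ ∑ i ∈ s ∪ t, c i = 1 ∧ ∑ i ∈ s ∪ t, c i • i = x ∧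
      ∃ i ∈ t, c i ≠ 0 := by
  obtain ⟨w, hw0, -, hw1, hwy⟩ :=
    exists_weights_of_mem_convexHull (subset_union_left : s ⊆ s ∪ t) hy
  obtain ⟨v, hv0, hvt, hv1, hvz⟩ :=
    exists_weights_of_mem_convexHull (subset_union_right : t ⊆ s ∪ t) hz
  obtain ⟨a, b, ha, hb, hab, rfl⟩ := hx
  obtain ⟨k, -, hvk⟩ := exists_ne_zero_of_sum_ne_zero (hv1 ▸ one_ne_zero)
  have hk : k ∈ t := by_contra fun hk => hvk (hvt k hk)
  refine ⟨a • w + b • v, fun i => ?_, ?_, ?_, k, hk, ?_⟩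
  · exact add_nonneg (mul_nonneg ha.le (hw0 i)) (mul_nonneg hb.le (hv0 i))
  · simp only [Pi.add_apply, Pi.smul_apply, smul_eq_mul, sum_add_distrib, ← mul_sum, hw1, hv1,
      hab, mul_one]
  · simp only [Pi.add_apply, Pi.smul_apply, smul_eq_mul, add_smul, mul_smul, sum_add_distrib,
      ← smul_sum, hwy, hvz]
  · exact (add_pos_of_nonneg_of_pos (mul_nonneg ha.le (hw0 k))
      (mul_pos hb ((hv0 k).lt_of_ne' hvk))).ne'

end ConvexCombination

theorem Finset.sum_abs_le_sum_abs_of_nonneg_of_sum_eq {ι R : Type*} [AddCommGroup R]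
    [LinearOrder R] [IsOrderedAddMonoid R] {s : Finset ι} {c c' : ι → R} (hc : ∀ i ∈ s, 0 ≤ c i)
    (h : ∑ i ∈ s, c i = ∑ i ∈ s, c' i) : ∑ i ∈ s, |c i| ≤ ∑ i ∈ s, |c' i| :=
  calc ∑ i ∈ s, |c i| = ∑ i ∈ s, c' i :=
        (sum_congr rfl fun i hi => abs_of_nonneg (hc i hi)).trans h
    _ ≤ |∑ i ∈ s, c' i| := le_abs_self _
    _ ≤ ∑ i ∈ s, |c' i| := abs_sum_le_sum_abs _ _

theorem stmt12_general (D : ℕ) (A : AffineSubspace ℝ (Fin D → ℝ))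
    (Xin Xout : Finset (Fin D → ℝ))
    (xj : Fin D → ℝ)
    (hx : xj ∈ intrinsicInterior ℝ (convexHull ℝ ((Xin.erase xj : Finset _) : Set (Fin D → ℝ))))
    (hspan : affineSpan ℝ ((Xin.erase xj : Finset _) : Set (Fin D → ℝ)) = A)
    (hint : ((A : Set (Fin D → ℝ)) ∩ convexHull ℝ (Xout : Set (Fin D → ℝ))).Nonempty) :
    ∃ c : (Fin D → ℝ) → ℝ,
      (xj = ∑ i ∈ Xin.erase xj ∪ Xout, c i • i) ∧
      (∑ i ∈ Xin.erase xj ∪ Xout, c i = 1) ∧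
      (∀ c' : (Fin D → ℝ) → ℝ,
        (xj = ∑ i ∈ Xin.erase xj ∪ Xout, c' i • i ∧ ∑ i ∈ Xin.erase xj ∪ Xout, c' i = 1) →
        ∑ i ∈ Xin.erase xj ∪ Xout, |c i| ≤ ∑ i ∈ Xin.erase xj ∪ Xout, |c' i|) ∧
      (∃ i ∈ Xout, c i ≠ 0) := by
  obtain ⟨z, hzA, hz⟩ := hint
  have hzspan :
      z ∈ affineSpan ℝ (convexHull ℝ ((Xin.erase xj : Finset _) : Set (Fin D → ℝ))) := by
    rwa [affineSpan_convexHull, hspan]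
  obtain ⟨y, hy, hxy⟩ := exists_mem_openSegment_of_mem_intrinsicInterior hx hzspan
  obtain ⟨c, hc0, hc1, hcx, hout⟩ := exists_weights_of_mem_openSegment hy hz hxy
  exact ⟨c, hcx.symm, hc1, fun c' ⟨_, hc'1⟩ =>
    sum_abs_le_sum_abs_of_nonneg_of_sum_eq (fun i _ => hc0 i) (hc1.trans hc'1.symm), hout⟩

/-- The "only if" direction: if the affine subspace A intersects conv(X^(out)),
then there exists an optimal solution of the ASSC problem for a relative interior
point x_j that uses a point of X^(out) with nonzero coefficient. -/
theorem stmt12 (D : ℕ) (A : AffineSubspace ℝ (Fin D → ℝ))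
    (Xin Xout : Finset (Fin D → ℝ))
    (hXin : (Xin : Set (Fin D → ℝ)) ⊆ (A : Set (Fin D → ℝ)))
    (hXout : ∀ y ∈ Xout, y ∉ A)
    (xj : Fin D → ℝ)
    (hx : xj ∈ intrinsicInterior ℝ (convexHull ℝ ((Xin.erase xj : Finset _) : Set (Fin D → ℝ))))
    (hspan : affineSpan ℝ ((Xin.erase xj : Finset _) : Set (Fin D → ℝ)) = A)
    (hint : ((A : Set (Fin D → ℝ)) ∩ convexHull ℝ (Xout : Set (Fin D → ℝ))).Nonempty) :
    ∃ c : (Fin D → ℝ) → ℝ,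
      (xj = ∑ i ∈ Xin.erase xj ∪ Xout, c i • i) ∧
      (∑ i ∈ Xin.erase xj ∪ Xout, c i = 1) ∧
      (∀ c' : (Fin D → ℝ) → ℝ,
        (xj = ∑ i ∈ Xin.erase xj ∪ Xout, c' i • i ∧ ∑ i ∈ Xin.erase xj ∪ Xout, c' i = 1) →
        ∑ i ∈ Xin.erase xj ∪ Xout, |c i| ≤ ∑ i ∈ Xin.erase xj ∪ Xout, |c' i|) ∧
      (∃ i ∈ Xout, c i ≠ 0) :=
  stmt12_general D A Xin Xout xj hx hspan hint
end

section
/- If the collection of affine subspaces {A_ℓ}_{ℓ=1}^n in R^D is affinely independent and x_j ∈ A_ℓ, then every optimal solution c of the ASSC problem for x_j is subspace-preserving: c_i = 0 for every data point x_i not lying in A_ℓ. -/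
/-!
Put `o := x j ∈ A ℓ` at the origin and let `W κ` be the span of `A κ - o`. Then
`dim W κ ≤ dim A κ + [κ ≠ ℓ]` and `⨆ κ, W κ` is the direction of `aff (⋃ A)`, so the dimension
count defining affine independence forces the `W κ` to be independent and `o ∉ A κ` for `κ ≠ ℓ`.
Splitting `∑ c i • (x i - o) = 0` according to the subspaces, every piece vanishes; as `o ∉ A κ`,
the weights on each `A κ` with `κ ≠ ℓ` sum to `0`. Hence the part of `c` supported on `A ℓ` is
again feasible, and its `ℓ¹` norm is that of `c` minus the weight off `A ℓ`: by optimality of `c`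
that weight is `0`.
-/

open Module Submodule Finset

variable {K V ι : Type*} [Field K] [AddCommGroup V] [Module K V]

namespace Submodule

variable [FiniteDimensional K V]

theorem finrank_finsetSup_le_sum (p : ι → Submodule K V) (s : Finset ι) :
    finrank K ↥(s.sup p) ≤ ∑ i ∈ s, finrank K (p i) := by
  classical
  induction s using Finset.induction with
  | empty => simp
  | insert a s ha ih =>
    rw [sup_insert, sum_insert ha]
    exact (finrank_add_le_finrank_add_finrank _ _).trans (by omega)

theorem finrank_iSup_le_sum [Fintype ι] (p : ι → Submodule K V) :
    finrank K ↥(⨆ i, p i) ≤ ∑ i, finrank K (p i) := by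
  rw [← sup_univ_eq_iSup]
  exact finrank_finsetSup_le_sum p univ

theorem iSupIndep_of_sum_finrank_le [Fintype ι] {p : ι → Submodule K V}
    (h : ∑ i, finrank K (p i) ≤ finrank K ↥(⨆ i, p i)) : iSupIndep p := by
  classical
  rw [iSupIndep_iff_supIndep_univ, supIndep_iff_disjoint_erase]
  intro k hk
  have hsup : p k ⊔ (univ.erase k).sup p = ⨆ i, p i := by
    rw [← sup_insert, insert_erase hk, sup_univ_eq_iSup]
  have hrest := finrank_finsetSup_le_sum p (univ.erase k)
  have hdim := finrank_sup_add_finrank_inf_eq (p k) ((univ.erase k).sup p)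
  rw [hsup, ← add_sum_erase _ _ hk] at *
  rw [disjoint_iff, ← finrank_eq_zero]
  omega

end Submodule

namespace AffineSubspace

theorem span_vsub_eq_direction {s : AffineSubspace K V} {o : V} (ho : o ∈ s) :
    span K ((· -ᵥ o) '' (s : Set V)) = s.direction := by
  rw [direction_eq_vectorSpan, vectorSpan_eq_span_vsub_set_right K ho]

theorem sum_eq_zero_of_sum_smul_sub_eq_zero {ι' : Type*} {s : AffineSubspace K V} {o : V}
    (ho : o ∉ s) (t : Finset ι') (x : ι' → V) (hx : ∀ i ∈ t, x i ∈ s) (w : ι' → K)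
    (h : ∑ i ∈ t, w i • (x i - o) = 0) : ∑ i ∈ t, w i = 0 := by
  rcases t.eq_empty_or_nonempty with rfl | ⟨i₀, hi₀⟩
  · simp
  by_contra hw
  have hsplit : ∑ i ∈ t, w i • (x i - o) =
      ∑ i ∈ t, w i • (x i - x i₀) + (∑ i ∈ t, w i) • (x i₀ - o) := by
    rw [sum_smul, ← sum_add_distrib]
    exact sum_congr rfl fun i _ => by rw [← smul_add, sub_add_sub_cancel]
  have hdir : (∑ i ∈ t, w i) • (x i₀ - o) ∈ s.direction := by
    rw [eq_neg_of_add_eq_zero_right (hsplit.symm.trans h)]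
    exact neg_mem (sum_mem fun i hi => smul_mem _ _ (vsub_mem_direction (hx i hi) (hx i₀ hi₀)))
  rw [smul_mem_iff _ hw, ← vsub_eq_sub, vsub_left_mem_direction_iff_mem (hx i₀ hi₀)] at hdir
  exact ho hdir

variable [FiniteDimensional K V]

theorem finrank_span_vsub_le {s : AffineSubspace K V} {p : V} (hp : p ∈ s) (o : V) :
    finrank K (span K ((· -ᵥ o) '' (s : Set V))) ≤ finrank K s.direction + 1 := by
  have hle : span K ((· -ᵥ o) '' (s : Set V)) ≤ s.direction ⊔ K ∙ (p -ᵥ o) := by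
    rw [span_le]
    rintro _ ⟨y, hy, rfl⟩
    show y -ᵥ o ∈ _
    rw [← vsub_add_vsub_cancel y p o]
    exact add_mem (mem_sup_left (vsub_mem_direction hy hp))
      (mem_sup_right (mem_span_singleton_self _))
  calc finrank K (span K ((· -ᵥ o) '' (s : Set V)))
      ≤ finrank K ↥(s.direction ⊔ K ∙ (p -ᵥ o)) := finrank_mono hle
    _ ≤ finrank K s.direction + finrank K (K ∙ (p -ᵥ o)) :=
        finrank_add_le_finrank_add_finrank _ _
    _ ≤ finrank K s.direction + 1 := by
        grw [show finrank K (K ∙ (p -ᵥ o)) ≤ 1 by simpa using finrank_span_le_card {p -ᵥ o}]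

theorem finrank_span_vsub_le_ite [DecidableEq ι] {A : ι → AffineSubspace K V} {o : V} {ℓ : ι}
    (hne : ∀ κ, (A κ : Set V).Nonempty) (ho : o ∈ A ℓ) (κ : ι) :
    finrank K (span K ((· -ᵥ o) '' (A κ : Set V))) ≤
      finrank K (A κ).direction + if κ = ℓ then 0 else 1 := by
  split_ifs with h
  · subst h
    rw [AffineSubspace.span_vsub_eq_direction ho, add_zero]
  · obtain ⟨p, hp⟩ := hne κ
    exact finrank_span_vsub_le hp o

end AffineSubspace

def AffinelyIndependentSubspaces [Fintype ι] (A : ι → AffineSubspace K V) : Prop :=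
  finrank K (affineSpan K (⋃ κ, (A κ : Set V))).direction =
    ∑ κ, finrank K (A κ).direction + (Fintype.card ι - 1)

namespace AffinelyIndependentSubspaces

variable [Fintype ι] [DecidableEq ι] {A : ι → AffineSubspace K V} {o : V} {ℓ : ι}

theorem finrank_iSup_span_vsub (hA : AffinelyIndependentSubspaces A) (ho : o ∈ A ℓ) :
    finrank K ↥(⨆ κ, span K ((· -ᵥ o) '' (A κ : Set V))) =
      ∑ κ, (finrank K (A κ).direction + if κ = ℓ then 0 else 1) := by
  have hcount : ∑ κ, (if κ = ℓ then 0 else 1) = Fintype.card ι - 1 := by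
    simp [sum_ite, filter_ne', card_erase_of_mem]
  rw [sum_add_distrib, hcount, ← hA, direction_affineSpan,
    vectorSpan_eq_span_vsub_set_right K (Set.mem_iUnion.2 ⟨ℓ, ho⟩), Set.image_iUnion, span_iUnion]

variable [FiniteDimensional K V]

theorem iSupIndep_span_vsub (hA : AffinelyIndependentSubspaces A)
    (hne : ∀ κ, (A κ : Set V).Nonempty) (ho : o ∈ A ℓ) :
    iSupIndep fun κ => span K ((· -ᵥ o) '' (A κ : Set V)) :=
  iSupIndep_of_sum_finrank_le <|
    (sum_le_sum fun κ _ => AffineSubspace.finrank_span_vsub_le_ite hne ho κ).trans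
      (hA.finrank_iSup_span_vsub ho).ge

theorem notMem_of_mem (hA : AffinelyIndependentSubspaces A)
    (hne : ∀ κ, (A κ : Set V).Nonempty) (ho : o ∈ A ℓ) {κ : ι} (hκ : κ ≠ ℓ) : o ∉ A κ := by
  intro hoκ
  have hle := fun κ (_ : κ ∈ univ) => AffineSubspace.finrank_span_vsub_le_ite hne ho κ
  have hsum := le_antisymm (sum_le_sum hle)
    ((hA.finrank_iSup_span_vsub ho).symm.le.trans (finrank_iSup_le_sum _))
  have hκeq := (sum_eq_sum_iff_of_le hle).1 hsum κ (mem_univ κ)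
  rw [if_neg hκ, AffineSubspace.span_vsub_eq_direction hoκ] at hκeq
  omega

open Classical in
theorem sum_filter_mem_eq_one (hA : AffinelyIndependentSubspaces A)
    (hne : ∀ κ, (A κ : Set V).Nonempty) {ι' : Type*} [Fintype ι'] (x : ι' → V)
    (hx : ∀ i, ∃ κ, x i ∈ A κ) (c : ι' → K) (hc : ∑ i, c i = 1) (ho : o ∈ A ℓ)
    (hco : ∑ i, c i • x i = o) :
    ∑ i with x i ∈ A ℓ, c i = 1 ∧ ∑ i with x i ∈ A ℓ, c i • x i = o := by
  choose g hg using hx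
  have hgκ : ∀ κ, ∀ i ∈ univ.filter (fun i => g i = κ), x i ∈ A κ := fun κ i hi =>
    (mem_filter.1 hi).2 ▸ hg i
  -- the `A κ` are pairwise disjoint, so the labels `g` detect membership in `A ℓ`
  have hfilter : univ.filter (fun i => x i ∈ A ℓ) = univ.filter (fun i => g i = ℓ) :=
    filter_congr fun i _ => ⟨fun h => by_contra fun hgi => hA.notMem_of_mem hne h hgi (hg i),
      fun h => h ▸ hg i⟩
  set v : ι → V := fun κ => ∑ i with g i = κ, c i • (x i - o)
  have hv : ∀ κ, v κ = 0 := by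
    have hmem : ∀ κ ∈ univ, v κ ∈ span K ((· -ᵥ o) '' (A κ : Set V)) := fun κ _ =>
      sum_mem fun i hi => smul_mem _ _ (subset_span ⟨x i, hgκ κ i hi, rfl⟩)
    have htot : ∑ κ, v κ = 0 := by
      simp only [v, sum_fiberwise, smul_sub, sum_sub_distrib, ← sum_smul, hc, hco, one_smul,
        sub_self]
    exact fun κ => (iSupIndep_iff_finsetSum_eq_zero_imp_eq_zero _).1
      (hA.iSupIndep_span_vsub hne ho) univ v hmem htot κ (mem_univ κ)
  have hweight : ∀ κ ≠ ℓ, ∑ i with g i = κ, c i = 0 := fun κ hκ =>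
    AffineSubspace.sum_eq_zero_of_sum_smul_sub_eq_zero (hA.notMem_of_mem hne ho hκ) _ x
      (hgκ κ) c (hv κ)
  have hℓ : ∑ i with g i = ℓ, c i = 1 := by
    rw [← hc, ← sum_fiberwise univ g c, sum_eq_single ℓ (fun κ _ hκ => hweight κ hκ) (by simp)]
  have hvℓ := hv ℓ
  simp only [v, smul_sub, sum_sub_distrib, ← sum_smul, hℓ, one_smul, sub_eq_zero] at hvℓ
  rw [hfilter]
  exact ⟨hℓ, hvℓ⟩

end AffinelyIndependentSubspaces

theorem eq_zero_of_sum_abs_le_sum_abs_ite {R : Type*} [AddCommGroup R] [LinearOrder R]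
    [IsOrderedAddMonoid R] [Fintype ι] {c : ι → R} {p : ι → Prop} [DecidablePred p] (h : ∑ i, |c i| ≤ ∑ i, |if p i then c i else 0|) {i : ι} (hi : ¬ p i) :
    c i = 0 := by
  have hrestrict : ∑ i, |if p i then c i else 0| = ∑ i with p i, |c i| := by
    rw [sum_filter]
    exact sum_congr rfl fun i _ => by split_ifs <;> simp
  have hsplit := sum_filter_add_sum_filter_not univ p fun i => |c i|
  have hout : ∑ i with ¬ p i, |c i| = 0 :=
    le_antisymm ((add_le_iff_nonpos_right _).1 (hsplit.trans_le (h.trans_eq hrestrict)))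
      (sum_nonneg fun _ _ => abs_nonneg _)
  exact abs_eq_zero.1 ((sum_eq_zero_iff_of_nonneg fun _ _ => abs_nonneg _).1 hout i (by simp [hi]))

theorem stmt13_general (D n N : ℕ) (A : Fin n → AffineSubspace ℝ (Fin D → ℝ))
    (hne : ∀ ℓ, (A ℓ : Set (Fin D → ℝ)).Nonempty)
    (hind : Module.finrank ℝ (affineSpan ℝ (⋃ ℓ, (A ℓ : Set (Fin D → ℝ)))).direction =
      (∑ ℓ, Module.finrank ℝ (A ℓ).direction) + (n - 1))
    (x : Fin N → (Fin D → ℝ)) (hX : ∀ i, ∃ κ, x i ∈ A κ)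
    (j : Fin N) (ℓ : Fin n) (hj : x j ∈ A ℓ)
    (c : Fin N → ℝ)
    (hfeas : c j = 0 ∧ (∑ i, c i = 1) ∧ x j = ∑ i, c i • x i)
    (hopt : ∀ c' : Fin N → ℝ,
      (c' j = 0 ∧ (∑ i, c' i = 1) ∧ x j = ∑ i, c' i • x i) →
      ∑ i, |c i| ≤ ∑ i, |c' i|) :
    ∀ i, x i ∉ A ℓ → c i = 0 := by
  classical
  intro i hi
  obtain ⟨hcj, hcsum, hcx⟩ := hfeas
  have hA : AffinelyIndependentSubspaces A := by
    rwa [AffinelyIndependentSubspaces, Fintype.card_fin]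
  obtain ⟨hS1, hSx⟩ := hA.sum_filter_mem_eq_one hne x hX c hcsum hj hcx.symm
  refine eq_zero_of_sum_abs_le_sum_abs_ite
    (hopt (fun i => if x i ∈ A ℓ then c i else 0) ⟨by simp [hcj], ?_, ?_⟩) hi
  · rw [← sum_filter, hS1]
  · simp only [ite_smul, zero_smul]
    rw [← sum_filter, hSx]

/-- Subspace-preserving recovery under the affine independence assumption:
if the affine subspaces are affinely independent and the ASSC problem for x_j is
feasible using only points from its own subspace A_ℓ, then every optimal solution
is subspace-preserving. -/
theorem stmt13 (D n N : ℕ) (A : Fin n → AffineSubspace ℝ (Fin D → ℝ))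
    (hne : ∀ ℓ, (A ℓ : Set (Fin D → ℝ)).Nonempty)
    (hind : Module.finrank ℝ (affineSpan ℝ (⋃ ℓ, (A ℓ : Set (Fin D → ℝ)))).direction =
      (∑ ℓ, Module.finrank ℝ (A ℓ).direction) + (n - 1))
    (x : Fin N → (Fin D → ℝ)) (hX : ∀ i, ∃ κ, x i ∈ A κ)
    (j : Fin N) (ℓ : Fin n) (hj : x j ∈ A ℓ)
    (hfeas0 : ∃ c0 : Fin N → ℝ, c0 j = 0 ∧ (∀ i, c0 i ≠ 0 → x i ∈ A ℓ) ∧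
      (∑ i, c0 i = 1) ∧ x j = ∑ i, c0 i • x i)
    (c : Fin N → ℝ)
    (hfeas : c j = 0 ∧ (∑ i, c i = 1) ∧ x j = ∑ i, c i • x i)
    (hopt : ∀ c' : Fin N → ℝ,
      (c' j = 0 ∧ (∑ i, c' i = 1) ∧ x j = ∑ i, c' i • x i) →
      ∑ i, |c i| ≤ ∑ i, |c' i|) :
    ∀ i, x i ∉ A ℓ → c i = 0 :=
  stmt13_general D n N A hne hind x hX j ℓ hj c hfeas hopt
end

section
/- Let x_j be an extreme point of Q = conv(X^(ℓ)), where X^(ℓ) is the set of data points in the affine subspace containing x_j. If there exists a feasible solution c of the ASSC problem for x_j that is nonnegative, then no optimal solution of the ASSC problem for x_j is subspace-preserving. -/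
/-- For an extreme point x_j of conv(X^(ℓ)), if there is a nonnegative feasible
solution of the ASSC problem, then no optimal solution is subspace-preserving. -/
theorem stmt14 (D : ℕ) (X Xl : Finset (Fin D → ℝ)) (hsub : Xl ⊆ X)
    (xj : Fin D → ℝ) (hxj : xj ∈ Xl)
    (hext : xj ∈ Set.extremePoints ℝ (convexHull ℝ (Xl : Set (Fin D → ℝ))))
    (c0 : (Fin D → ℝ) → ℝ)
    (hfeas0 : xj = ∑ i ∈ X.erase xj, c0 i • i ∧ ∑ i ∈ X.erase xj, c0 i = 1)
    (hnn : ∀ i ∈ X.erase xj, 0 ≤ c0 i) :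
    ∀ c : (Fin D → ℝ) → ℝ,
      (xj = ∑ i ∈ X.erase xj, c i • i ∧ ∑ i ∈ X.erase xj, c i = 1) →
      (∀ c' : (Fin D → ℝ) → ℝ,
        (xj = ∑ i ∈ X.erase xj, c' i • i ∧ ∑ i ∈ X.erase xj, c' i = 1) →
        ∑ i ∈ X.erase xj, |c i| ≤ ∑ i ∈ X.erase xj, |c' i|) →
      ¬ (∀ i ∈ X.erase xj, c i ≠ 0 → i ∈ Xl) := by
  intro c hfeas hopt hsp
  -- ℓ1 norm of c0 is 1
  have h0 : ∑ i ∈ X.erase xj, |c0 i| = 1 := by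
    rw [← hfeas0.2]
    exact Finset.sum_congr rfl fun i hi => abs_of_nonneg (hnn i hi)
  -- optimality: ∑ |c i| ≤ 1 = ∑ c i
  have hle : ∑ i ∈ X.erase xj, |c i| ≤ ∑ i ∈ X.erase xj, c i := by
    rw [hfeas.2, ← h0]; exact hopt c0 hfeas0
  -- hence c i ≥ 0 everywhere
  have hcnn : ∀ i ∈ X.erase xj, 0 ≤ c i := by
    intro i hi
    by_contra hneg
    push_neg at hneg
    have : ∑ i ∈ X.erase xj, c i < ∑ i ∈ X.erase xj, |c i| :=
      Finset.sum_lt_sum (fun i _ => le_abs_self _) ⟨i, hi, by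
        rw [abs_of_neg hneg]; linarith⟩
    linarith
  -- restrict sums to Xl.erase xj
  have hsub' : Xl.erase xj ⊆ X.erase xj := Finset.erase_subset_erase _ hsub
  have hzero : ∀ i ∈ X.erase xj, i ∉ Xl.erase xj → c i = 0 := by
    intro i hi hni
    by_contra h
    exact hni (Finset.mem_erase.2 ⟨(Finset.mem_erase.1 hi).1, hsp i hi h⟩)
  have hsum1 : ∑ i ∈ Xl.erase xj, c i = 1 := by
    rw [← hfeas.2]
    exact Finset.sum_subset hsub' hzero
  have hsumx : xj = ∑ i ∈ Xl.erase xj, c i • i := by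
    refine hfeas.1.trans (Finset.sum_subset hsub' fun i hi hni => ?_).symm
    rw [hzero i hi hni, zero_smul]
  -- xj ∈ convexHull of Xl \ {xj}
  have hmem : xj ∈ convexHull ℝ ((Xl : Set (Fin D → ℝ)) \ {xj}) := by
    have := Finset.centerMass_mem_convexHull (Xl.erase xj)
      (w := c) (z := id) (fun i hi => hcnn i (hsub' hi))
      (by rw [hsum1]; norm_num)
      (fun i hi => by
        rcases Finset.mem_erase.1 hi with ⟨hne, hmem⟩
        exact Set.mem_diff_singleton.2 ⟨Finset.mem_coe.2 hmem, hne⟩)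
    rwa [Finset.centerMass, hsum1, inv_one, one_smul,
      show ∑ i ∈ Xl.erase xj, c i • id i = xj from hsumx.symm] at this
  -- contradiction with extremeness
  rw [(convex_convexHull ℝ _).mem_extremePoints_iff_mem_diff_convexHull_diff] at hext
  refine hext.2 (convexHull_mono ?_ hmem)
  intro y hy
  exact ⟨subset_convexHull ℝ _ hy.1, hy.2⟩
end

section
/- Let A_ℓ be an affine subspace of R^D with finite data set X^(ℓ) ⊆ A_ℓ, and let F be a face of Q^(ℓ) = conv(X^(ℓ)). If A_ℓ ∩ conv(X^(−ℓ)) = ∅, then aff(F) ∩ conv(X^(−F)) = ∅, where X^(−ℓ) is the set of all data points not in A_ℓ and X^(−F) is the set of all data points not lying on F. -/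
/-!
Points of `X` off the face `F` either lie in `A_ℓ` (then they are points of `X^(ℓ)` off `F`) or
outside it. A point `y` of `aff F ⊆ A_ℓ` on a segment from `conv (X^(ℓ) \ F)` to `conv (X^(−ℓ))`
must be the first endpoint: otherwise the second endpoint lies on the line through two points of
`A_ℓ`, contradicting the separation hypothesis. So `y ∈ conv (X^(ℓ) \ F) ⊆ Q^(ℓ) \ F`, the latter
being convex since `F` is a face. Finally a face `F` is cut out of `Q^(ℓ)` by its affine span,
because the points of `aff F` are the points `p + m • (a - b)` with `p, a, b ∈ F` and `m ≥ 0`.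
-/

open Set

section

variable {V : Type*} [AddCommGroup V] [Module ℝ V]

lemma Convex.exists_nonneg_smul_sub_of_mem_vectorSpan {F : Set V} (hF : Convex ℝ F)
    (hne : F.Nonempty) {v : V} (hv : v ∈ vectorSpan ℝ F) :
    ∃ m : ℝ, 0 ≤ m ∧ ∃ a ∈ F, ∃ b ∈ F, v = m • (a - b) := by
  obtain ⟨f, hf⟩ := hne
  rw [vectorSpan_def] at hv
  induction hv using Submodule.span_induction with
  | mem x hx =>
    obtain ⟨a, ha, b, hb, rfl⟩ := hx
    exact ⟨1, zero_le_one, a, ha, b, hb, by rw [one_smul]; rfl⟩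
  | zero => exact ⟨0, le_rfl, f, hf, f, hf, by rw [zero_smul]⟩
  | add x y _ _ ihx ihy =>
    obtain ⟨m₁, hm₁, a, ha, b, hb, rfl⟩ := ihx
    obtain ⟨m₂, hm₂, c, hc, d, hd, rfl⟩ := ihy
    rcases (add_nonneg hm₁ hm₂).eq_or_lt with hm | hm
    · obtain ⟨rfl, rfl⟩ : m₁ = 0 ∧ m₂ = 0 := ⟨by linarith, by linarith⟩
      exact ⟨0, le_rfl, f, hf, f, hf, by simp⟩
    · -- `m₁ (a - b) + m₂ (c - d) = m (a' - b')` for the `m₁ : m₂` averages `a'`, `b'`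
      have hsum : m₁ / (m₁ + m₂) + m₂ / (m₁ + m₂) = 1 := by rw [← add_div, div_self hm.ne']
      refine ⟨m₁ + m₂, hm.le, _, hF ha hc (by positivity) (by positivity) hsum,
        _, hF hb hd (by positivity) (by positivity) hsum, ?_⟩
      have := hm.ne'
      match_scalars <;> field_simp
  | smul c x _ ihx =>
    obtain ⟨m, hm, a, ha, b, hb, rfl⟩ := ihx
    rcases le_or_gt 0 c with hc | hc
    · exact ⟨c * m, mul_nonneg hc hm, a, ha, b, hb, by module⟩
    · exact ⟨-(c * m), by nlinarith, b, hb, a, ha, by module⟩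

lemma IsExtreme.mem_of_mem_affineSpan {Q F : Set V} (hF : IsExtreme ℝ Q F)
    (hFconv : Convex ℝ F) {y : V} (hyQ : y ∈ Q) (hy : y ∈ affineSpan ℝ F) : y ∈ F := by
  rw [← AffineSubspace.mem_coe, coe_affineSpan] at hy
  obtain ⟨p, hp, v, hv, rfl⟩ := hy
  obtain ⟨m, hm, a, ha, b, hb, rfl⟩ :=
    hFconv.exists_nonneg_smul_sub_of_mem_vectorSpan ⟨p, hp⟩ hv
  rcases hm.eq_or_lt with rfl | hm
  · simpa using hp
  -- `e := (p + m a) / (1 + m) ∈ F` lies strictly between `y = p + m (a - b)` and `b ∈ F`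
  have h1m : (0 : ℝ) < 1 + m := by linarith
  have hsum : 1 / (1 + m) + m / (1 + m) = 1 := by rw [← add_div, div_self h1m.ne']
  have heF : (1 / (1 + m)) • p + (m / (1 + m)) • a ∈ F :=
    hFconv hp ha (by positivity) (by positivity) hsum
  refine hF.left_mem_of_mem_openSegment hyQ (hF.subset hb) heF
    ⟨1 / (1 + m), m / (1 + m), by positivity, by positivity, hsum, ?_⟩
  have := h1m.ne'
  rw [vadd_eq_add]
  match_scalars <;> field_simp
  ring

lemma IsExtreme.convexHull_subset_sdiff {Q F s : Set V} (hQ : Convex ℝ Q) (hF : IsExtreme ℝ Q F)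
    (hs : s ⊆ Q \ F) : convexHull ℝ s ⊆ Q \ F :=
  convexHull_min hs (hF.convex_sdiff hQ)

lemma AffineSubspace.inter_convexHull_union_subset (A : AffineSubspace ℝ V) {s t : Set V}
    (hs : s ⊆ A) (ht : Disjoint (A : Set V) (convexHull ℝ t)) :
    (A : Set V) ∩ convexHull ℝ (s ∪ t) ⊆ convexHull ℝ s := by
  rintro y ⟨hyA, hy⟩
  rcases s.eq_empty_or_nonempty with rfl | hsne
  · rw [empty_union] at hy
    exact (ht.notMem_of_mem_left hyA hy).elim
  rcases t.eq_empty_or_nonempty with rfl | htne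
  · rwa [union_empty] at hy
  rw [convexHull_union hsne htne, mem_convexJoin] at hy
  obtain ⟨u, hu, v, hv, hyuv⟩ := hy
  by_contra hyu
  have hne : u ≠ y := by rintro rfl; exact hyu hu
  have huA : u ∈ A := convexHull_min hs A.convex hu
  have hvA : v ∈ A := affineSpan_pair_le_of_mem_of_mem huA hyA
    ((mem_segment_iff_wbtw.mp hyuv).right_mem_affineSpan_of_left_ne hne)
  exact ht.notMem_of_mem_left hvA hv

end

/-- If A_ℓ does not intersect conv(X^(−ℓ)), then for any face F of conv(X^(ℓ)),
aff(F) does not intersect conv(X^(−F)). -/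
theorem stmt16 (D : ℕ) (A : AffineSubspace ℝ (Fin D → ℝ))
    (X Xl : Finset (Fin D → ℝ))
    (hXl : (Xl : Set (Fin D → ℝ)) = (X : Set (Fin D → ℝ)) ∩ (A : Set (Fin D → ℝ)))
    (F : Set (Fin D → ℝ)) (hFconv : Convex ℝ F)
    (hF : IsExtreme ℝ (convexHull ℝ (Xl : Set (Fin D → ℝ))) F)
    (hsep : (A : Set (Fin D → ℝ)) ∩
        convexHull ℝ ((X : Set (Fin D → ℝ)) \ (A : Set (Fin D → ℝ))) = ∅) :
    (affineSpan ℝ F : Set (Fin D → ℝ)) ∩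
      convexHull ℝ ((X : Set (Fin D → ℝ)) \ F) = ∅ := by
  set Q := convexHull ℝ (Xl : Set (Fin D → ℝ))
  have hXlA : (Xl : Set (Fin D → ℝ)) ⊆ A := hXl ▸ inter_subset_right
  have hFA : F ⊆ A := hF.subset.trans (convexHull_min hXlA A.convex)
  have hsplit : (X : Set (Fin D → ℝ)) \ F ⊆ ((Xl : Set (Fin D → ℝ)) \ F) ∪ (X \ A) := by
    rintro x ⟨hxX, hxF⟩
    by_cases hxA : x ∈ A
    · exact Or.inl ⟨hXl ▸ ⟨hxX, hxA⟩, hxF⟩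
    · exact Or.inr ⟨hxX, hxA⟩
  refine eq_empty_iff_forall_notMem.mpr fun y ⟨hyF, hy⟩ => ?_
  have hyA : y ∈ A := affineSpan_le.mpr hFA hyF
  have hyQF : y ∈ Q \ F :=
    hF.convexHull_subset_sdiff (convex_convexHull ℝ _)
      (fun x hx => ⟨subset_convexHull ℝ _ hx.1, hx.2⟩)
      (A.inter_convexHull_union_subset (sdiff_subset.trans hXlA)
        (disjoint_iff_inter_eq_empty.mpr hsep) ⟨hyA, convexHull_mono hsplit hy⟩)
  exact hyQF.2 (hF.mem_of_mem_affineSpan hFconv hyQF.1 hyF)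
end
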